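/- Fix an integer k ≥ 1 and define ε(2)_q = min(q+1, 2k−q−1) for 0 ≤ q < 2k, and λ(2,2)_m = (3/(2k³)) Σ_{q=0}^{2k−m−1} ε(2)_q ε(2)_{q+m} for 0 ≤ m ≤ 2k−1. Then (1/k) · Σ_{m=1}^{2k−1} (λ(2,2)_m)² → 151/280 as k → ∞. -/

import Mathlib

open Filter

/-- The weight sequence `ε(2)_q = min(q+1, 2k−q−1)`. -/
noncomputable def eps2 (k q : ℕ) : ℝ := min ((q : ℝ) + 1) (2 * (k : ℝ) - (q : ℝ) - 1)

/-- The weight `λ(2,2)_m = (3/(2k³)) Σ_{q=0}^{2k−m−1} ε(2)_q ε(2)_{q+m}`. -/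
noncomputable def lam22 (k m : ℕ) : ℝ :=
  (3 / (2 * (k : ℝ) ^ 3)) * ∑ q ∈ Finset.range (2 * k - m), eps2 k q * eps2 k (q + m)

/-!
The correlation sum `T(k, m) = ∑_q ε(2)_q ε(2)_{q+m}` is piecewise polynomial in `m`: splitting
the range of `q` at the kinks of the tent `ε(2)` gives `T = 2k³/3 + k/3 - k m² + (m³ - m)/2`
for `m ≤ k` and `T = (n³ - n)/6` with `n = 2k - m` for `m ≥ k`. Summing the squares with
Faulhaber's formulas yields `∑_{m=1}^{2k-1} T² = 151k⁷/630 + O(k⁶)` exactly, so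
`(1/k) ∑ λ(2,2)_m² = (9/(4k⁷)) ∑ T²` is a polynomial in `1/k` with constant term `151/280`.
-/

open Finset

lemma eps2_of_lt {k q : ℕ} (h : q < k) : eps2 k q = q + 1 := by
  have : (q : ℝ) + 1 ≤ k := by exact_mod_cast h
  exact min_eq_left (by linarith)

lemma eps2_of_le {k q : ℕ} (h : k ≤ q) : eps2 k q = 2 * k - q - 1 := by
  have : (k : ℝ) ≤ q := by exact_mod_cast h
  exact min_eq_right (by linarith)

/-- Faulhaber: the discrete primitive of `c₆ x⁶ + ⋯ + c₁ x + c₀`, vanishing at `0`. -/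
noncomputable def sexticPrimitive (c0 c1 c2 c3 c4 c5 c6 x : ℝ) : ℝ :=
  c6 * (x ^ 7 / 7 - x ^ 6 / 2 + x ^ 5 / 2 - x ^ 3 / 6 + x / 42)
  + c5 * (x ^ 6 / 6 - x ^ 5 / 2 + 5 * x ^ 4 / 12 - x ^ 2 / 12)
  + c4 * (x ^ 5 / 5 - x ^ 4 / 2 + x ^ 3 / 3 - x / 30)
  + c3 * (x ^ 4 / 4 - x ^ 3 / 2 + x ^ 2 / 4)
  + c2 * (x ^ 3 / 3 - x ^ 2 / 2 + x / 6)
  + c1 * (x ^ 2 / 2 - x / 2)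
  + c0 * x

lemma sum_range_sextic (c0 c1 c2 c3 c4 c5 c6 : ℝ) (n : ℕ) :
    ∑ q ∈ range n, (c6 * (q : ℝ) ^ 6 + c5 * (q : ℝ) ^ 5 + c4 * (q : ℝ) ^ 4 + c3 * (q : ℝ) ^ 3
      + c2 * (q : ℝ) ^ 2 + c1 * q + c0) = sexticPrimitive c0 c1 c2 c3 c4 c5 c6 n := by
  induction n with
  | zero => simp [sexticPrimitive]
  | succ n ih =>
    rw [sum_range_succ, ih]
    simp only [sexticPrimitive]
    push_cast
    ring

lemma sum_Ico_sextic (c0 c1 c2 c3 c4 c5 c6 : ℝ) {a b : ℕ} (hab : a ≤ b) :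
    ∑ q ∈ Ico a b, (c6 * (q : ℝ) ^ 6 + c5 * (q : ℝ) ^ 5 + c4 * (q : ℝ) ^ 4 + c3 * (q : ℝ) ^ 3
      + c2 * (q : ℝ) ^ 2 + c1 * q + c0)
      = sexticPrimitive c0 c1 c2 c3 c4 c5 c6 b - sexticPrimitive c0 c1 c2 c3 c4 c5 c6 a := by
  rw [sum_Ico_eq_sub _ hab, sum_range_sextic, sum_range_sextic]

lemma sum_Ico_quadratic (c0 c1 c2 : ℝ) {a b : ℕ} (hab : a ≤ b) :
    ∑ q ∈ Ico a b, (c2 * (q : ℝ) ^ 2 + c1 * q + c0)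
      = sexticPrimitive c0 c1 c2 0 0 0 0 b - sexticPrimitive c0 c1 c2 0 0 0 0 a := by
  rw [← sum_Ico_sextic _ _ _ _ _ _ _ hab]
  simp

lemma sum_eps2_mul_eps2_of_le {k m : ℕ} (hm : m ≤ k) :
    ∑ q ∈ range (2 * k - m), eps2 k q * eps2 k (q + m)
      = 2 / 3 * (k : ℝ) ^ 3 + k / 3 - k * (m : ℝ) ^ 2 + ((m : ℝ) ^ 3 - m) / 2 := by
  rw [range_eq_Ico, ← sum_Ico_consecutive _ (Nat.zero_le (k - m)) (by omega : k - m ≤ 2 * k - m),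
    ← sum_Ico_consecutive _ (by omega : k - m ≤ k) (by omega : k ≤ 2 * k - m)]
  have both_rising : ∀ q ∈ Ico 0 (k - m), eps2 k q * eps2 k (q + m)
      = 1 * (q : ℝ) ^ 2 + (m + 2) * q + (m + 1) := by
    intro q hq
    rw [mem_Ico] at hq
    rw [eps2_of_lt (by omega), eps2_of_lt (by omega)]
    push_cast
    ring
  have rising_falling : ∀ q ∈ Ico (k - m) k, eps2 k q * eps2 k (q + m)
      = -1 * (q : ℝ) ^ 2 + (2 * k - m - 2) * q + (2 * k - m - 1) := by
    intro q hq
    rw [mem_Ico] at hq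
    rw [eps2_of_lt (by omega), eps2_of_le (by omega)]
    push_cast
    ring
  have both_falling : ∀ q ∈ Ico k (2 * k - m), eps2 k q * eps2 k (q + m)
      = 1 * (q : ℝ) ^ 2 + -(4 * k - m - 2) * q + (2 * k - 1) * (2 * k - m - 1) := by
    intro q hq
    rw [mem_Ico] at hq
    rw [eps2_of_le (by omega), eps2_of_le (by omega)]
    push_cast
    ring
  rw [sum_congr rfl both_rising, sum_congr rfl rising_falling, sum_congr rfl both_falling,
    sum_Ico_quadratic _ _ _ (Nat.zero_le _), sum_Ico_quadratic _ _ _ (by omega : k - m ≤ k),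
    sum_Ico_quadratic _ _ _ (by omega : k ≤ 2 * k - m)]
  simp only [sexticPrimitive]
  rw [Nat.cast_sub hm, Nat.cast_sub (by omega : m ≤ 2 * k)]
  push_cast
  ring

lemma sum_eps2_mul_eps2_of_ge {k m : ℕ} (hm : k ≤ m) :
    ∑ q ∈ range (2 * k - m), eps2 k q * eps2 k (q + m)
      = (((2 * k - m : ℕ) : ℝ) ^ 3 - (2 * k - m : ℕ)) / 6 := by
  have rising_falling : ∀ q ∈ range (2 * k - m), eps2 k q * eps2 k (q + m)
      = -1 * (q : ℝ) ^ 2 + ((2 * k - m : ℕ) - 2) * q + ((2 * k - m : ℕ) - 1) := by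
    intro q hq
    rw [mem_range] at hq
    rw [eps2_of_lt (by omega), eps2_of_le (by omega), Nat.cast_sub (by omega)]
    push_cast
    ring
  rw [sum_congr rfl rising_falling, range_eq_Ico, sum_Ico_quadratic _ _ _ (Nat.zero_le _)]
  simp only [sexticPrimitive]
  push_cast
  ring

lemma sum_sq_sum_eps2_mul_eps2 {k : ℕ} (hk : 1 ≤ k) :
    ∑ m ∈ Icc 1 (2 * k - 1), (∑ q ∈ range (2 * k - m), eps2 k q * eps2 k (q + m)) ^ 2
      = (151 * (k : ℝ) ^ 7 - 140 * (k : ℝ) ^ 6 + 70 * (k : ℝ) ^ 5 - 140 * (k : ℝ) ^ 4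
        + 49 * (k : ℝ) ^ 3 - 35 * (k : ℝ) ^ 2 + 45 * k) / 630 := by
  rw [← Ico_add_one_right_eq_Icc, Nat.sub_add_cancel (by omega),
    ← sum_Ico_consecutive _ (by omega : 1 ≤ k + 1) (by omega : k + 1 ≤ 2 * k)]
  have short_lags : ∀ m ∈ Ico 1 (k + 1),
      (∑ q ∈ range (2 * k - m), eps2 k q * eps2 k (q + m)) ^ 2
        = 1 / 4 * (m : ℝ) ^ 6 + (-k) * (m : ℝ) ^ 5 + (k ^ 2 - 1 / 2) * (m : ℝ) ^ 4
          + (2 / 3 * k ^ 3 + 4 / 3 * k) * (m : ℝ) ^ 3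
          + (-4 / 3 * k ^ 4 - 2 / 3 * k ^ 2 + 1 / 4) * (m : ℝ) ^ 2
          + (-2 / 3 * k ^ 3 - 1 / 3 * k) * m + (2 / 3 * k ^ 3 + k / 3) ^ 2 := by
    intro m hm
    rw [mem_Ico] at hm
    rw [sum_eps2_mul_eps2_of_le (by omega)]
    ring
  set tail : ℕ → ℝ := fun n => 1 / 36 * (n : ℝ) ^ 6 + 0 * (n : ℝ) ^ 5 + (-1 / 18) * (n : ℝ) ^ 4
    + 0 * (n : ℝ) ^ 3 + 1 / 36 * (n : ℝ) ^ 2 + 0 * n + 0 with tail_def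
  have long_lags : ∀ m ∈ Ico (k + 1) (2 * k),
      (∑ q ∈ range (2 * k - m), eps2 k q * eps2 k (q + m)) ^ 2 = tail (2 * k - m) := by
    intro m hm
    rw [mem_Ico] at hm
    rw [sum_eps2_mul_eps2_of_ge (by omega)]
    ring
  rw [sum_congr rfl short_lags, sum_congr rfl long_lags, sum_Ico_reflect tail _ (by omega),
    Nat.add_sub_cancel_left, (by omega : 2 * k + 1 - (k + 1) = k), tail_def,
    sum_Ico_sextic _ _ _ _ _ _ _ (by omega : 1 ≤ k + 1),
    sum_Ico_sextic _ _ _ _ _ _ _ hk]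
  simp only [sexticPrimitive]
  push_cast
  ring

lemma one_div_mul_sum_lam22_sq {k : ℕ} (hk : 0 < k) :
    1 / (k : ℝ) * ∑ m ∈ Icc 1 (2 * k - 1), lam22 k m ^ 2
      = 151 / 280 - (k : ℝ)⁻¹ / 2 + (k : ℝ)⁻¹ ^ 2 / 4 - (k : ℝ)⁻¹ ^ 3 / 2
        + 7 / 40 * (k : ℝ)⁻¹ ^ 4 - (k : ℝ)⁻¹ ^ 5 / 8 + 9 / 56 * (k : ℝ)⁻¹ ^ 6 := by
  simp only [lam22, mul_pow, ← mul_sum]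
  rw [sum_sq_sum_eps2_mul_eps2 hk]
  have : (k : ℝ) ≠ 0 := by positivity
  field_simp
  ring

/-- **The constant `151/280` in the asymptotic variance (Theorem 1 of the paper):**
`(1/k) Σ_{m=1}^{2k−1} λ(2,2)_m² → 151/280` as `k → ∞`. -/
theorem stmt_13 :
    Tendsto (fun k : ℕ => (1 / (k : ℝ)) * ∑ m ∈ Finset.Icc 1 (2 * k - 1), (lam22 k m) ^ 2)
      atTop (nhds (151 / 280)) := by
  have limit_poly : Tendsto (fun x : ℝ => 151 / 280 - x / 2 + x ^ 2 / 4 - x ^ 3 / 2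
      + 7 / 40 * x ^ 4 - x ^ 5 / 8 + 9 / 56 * x ^ 6) (nhds 0) (nhds (151 / 280)) := by
    refine Continuous.tendsto' ?_ 0 _ (by norm_num)
    fun_prop
  refine (limit_poly.comp tendsto_inv_atTop_nhds_zero_nat).congr' ?_
  filter_upwards [eventually_gt_atTop 0] with k hk
  exact (one_div_mul_sum_lam22_sq hk).symm
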